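/- Let G be a connected finite simple graph of order n ≥ 12 in which every pair of distinct nonadjacent vertices has degree sum at least n − 2, and suppose m(G,2) > 2. Let I be a set of maximum cardinality among all closures ⟨A⟩ of two-element sets A ⊆ V(G) under 2-neighbor bootstrap percolation, and let U = V(G) ∖ I. Then every vertex of U has exactly one neighbor in I. -/
import Mathlib


open Finset
open scoped Classical

/-- One step of the `r`-neighbor bootstrap percolation process: all currently
active vertices stay active, and every vertex with at least `r` active
neighbors becomes active. -/
noncomputable def bootStep {V : Type*} [Fintype V] (G : SimpleGraph V) (r : ℕ)
    (A : Finset V) : Finset V :=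
  A ∪ Finset.univ.filter (fun v => r ≤ (G.neighborFinset v ∩ A).card)

/-- The closure of `A` under `r`-neighbor bootstrap percolation, i.e. `⋃ₜ Aₜ`.
Since the process is monotone on a finite vertex set, iterating `|V|` times
reaches the fixed point. -/
noncomputable def bootClosure {V : Type*} [Fintype V] (G : SimpleGraph V) (r : ℕ)
    (A : Finset V) : Finset V :=
  (bootStep G r)^[Fintype.card V] A

/-- `G` `r`-percolates from the initially active set `A`. -/
def Percolates {V : Type*} [Fintype V] (G : SimpleGraph V) (r : ℕ)
    (A : Finset V) : Prop :=
  ∃ t : ℕ, (bootStep G r)^[t] A = Finset.univ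

/-- `m(G, r)`: the minimum size of an `r`-contagious set in `G`. -/
noncomputable def minContagious {V : Type*} [Fintype V] (G : SimpleGraph V) (r : ℕ) : ℕ :=
  sInf {k : ℕ | ∃ A : Finset V, A.card = k ∧ Percolates G r A}

set_option linter.unusedSectionVars false

section Infra
variable {V : Type*} [Fintype V] (G : SimpleGraph V)

lemma subset_bootStep (r : ℕ) (A : Finset V) : A ⊆ bootStep G r A :=
  subset_union_left

lemma bootStep_mono (r : ℕ) {A B : Finset V} (h : A ⊆ B) :
    bootStep G r A ⊆ bootStep G r B := by
  apply union_subset (h.trans subset_union_left)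
  intro v hv
  simp only [mem_filter, mem_univ, true_and] at hv
  exact subset_union_right (by
    simp only [mem_filter, mem_univ, true_and]
    exact hv.trans (card_le_card (inter_subset_inter (Finset.Subset.refl _) h)))

lemma subset_iterate_bootStep (r : ℕ) (A : Finset V) (t : ℕ) :
    A ⊆ (bootStep G r)^[t] A := by
  induction t with
  | zero => simp
  | succ t ih =>
      rw [Function.iterate_succ_apply']
      exact ih.trans (subset_bootStep G r _)

lemma subset_bootClosure (r : ℕ) (A : Finset V) : A ⊆ bootClosure G r A :=
  subset_iterate_bootStep G r A _

lemma bootStep_bootClosure (r : ℕ) (A : Finset V) :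
    bootStep G r (bootClosure G r A) = bootClosure G r A := by
  set f := bootStep G r with hf
  set n := Fintype.card V with hn
  have hstab : ∃ i ≤ n, f (f^[i] A) = f^[i] A := by
    by_contra hcon
    push_neg at hcon
    have hgrow : ∀ i, i ≤ n + 1 → i ≤ (f^[i] A).card := by
      intro i hi
      induction i with
      | zero => simp
      | succ i ih =>
          have h1 : (f^[i] A) ⊂ (f^[i+1] A) := by
            rw [Function.iterate_succ_apply']
            exact (subset_bootStep G r _).ssubset_of_ne
              (fun h => hcon i (by omega) h.symm)
          have := card_lt_card h1
          have := ih (by omega)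
          omega
    have := hgrow (n+1) le_rfl
    have := card_le_card (subset_univ (f^[n+1] A))
    rw [card_univ] at this
    omega
  obtain ⟨i, hi, hfix⟩ := hstab
  have hall : ∀ j, f^[i + j] A = f^[i] A := by
    intro j
    induction j with
    | zero => rfl
    | succ j ih =>
        rw [show i + (j + 1) = (i + j) + 1 by omega, Function.iterate_succ_apply', ih, hfix]
  have h1 : bootClosure G r A = f^[i] A := by
    have := hall (n - i)
    rw [show i + (n - i) = n by omega] at this
    exact this
  rw [h1, hfix]

lemma closed_spread {S : Finset V} (hS : bootStep G 2 S = S) {x y v : V}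
    (hx : x ∈ S) (hy : y ∈ S) (hxy : x ≠ y) (h1 : G.Adj v x) (h2 : G.Adj v y) :
    v ∈ S := by
  rw [← hS]
  apply subset_union_right
  simp only [mem_filter, mem_univ, true_and]
  have hsub : ({x, y} : Finset V) ⊆ G.neighborFinset v ∩ S := by
    intro z hz
    simp only [mem_insert, mem_singleton] at hz
    rcases hz with rfl | rfl <;>
      simp [SimpleGraph.mem_neighborFinset, *]
  calc 2 = ({x, y} : Finset V).card := (card_pair hxy).symm
    _ ≤ _ := card_le_card hsub

lemma closure_spread (A : Finset V) {x y v : V}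
    (hx : x ∈ bootClosure G 2 A) (hy : y ∈ bootClosure G 2 A) (hxy : x ≠ y)
    (h1 : G.Adj v x) (h2 : G.Adj v y) : v ∈ bootClosure G 2 A :=
  closed_spread G (bootStep_bootClosure G 2 A) hx hy hxy h1 h2

lemma closed_inter_le_one {S : Finset V} (hS : bootStep G 2 S = S) {v : V}
    (hv : v ∉ S) : (G.neighborFinset v ∩ S).card ≤ 1 := by
  by_contra h
  push_neg at h
  obtain ⟨x, hx, y, hy, hxy⟩ := one_lt_card.mp h
  simp only [mem_inter, SimpleGraph.mem_neighborFinset] at hx hy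
  exact hv (closed_spread G hS hx.2 hy.2 hxy hx.1 hy.1)

lemma walk_cross (I : Finset V) :
    ∀ {a b : V} (_ : G.Walk a b), a ∉ I → b ∈ I →
      ∃ u w, u ∉ I ∧ w ∈ I ∧ G.Adj u w := by
  intro a b p
  induction p with
  | nil => intro h1 h2; exact absurd h2 h1
  | @cons x y z h q ih =>
      intro h1 h2
      by_cases hm : y ∈ I
      · exact ⟨x, y, h1, hm, h⟩
      · exact ih hm h2

lemma boundary_edge (hconn : G.Connected) {I : Finset V}
    (h1 : I.Nonempty) (h2 : ∃ u, u ∉ I) :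
    ∃ u w, u ∉ I ∧ w ∈ I ∧ G.Adj u w := by
  obtain ⟨w0, hw0⟩ := h1
  obtain ⟨u0, hu0⟩ := h2
  obtain ⟨p⟩ := hconn u0 w0
  exact walk_cross G I p hu0 hw0

end Infra

theorem stmt7 {V : Type*} [Fintype V] (G : SimpleGraph V)
    (hconn : G.Connected) (hn : 12 ≤ Fintype.card V)
    (hdeg : ∀ x y : V, x ≠ y → ¬ G.Adj x y →
      Fintype.card V - 2 ≤ G.degree x + G.degree y)
    (hm : 2 < minContagious G 2)
    (I : Finset V)
    (hIcl : ∃ A : Finset V, A.card = 2 ∧ I = bootClosure G 2 A)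
    (hImax : ∀ A : Finset V, A.card = 2 → (bootClosure G 2 A).card ≤ I.card) :
    ∀ u ∈ Finset.univ \ I, (G.neighborFinset u ∩ I).card = 1 := by
  classical
  obtain ⟨A0, hA0card, hIdef⟩ := hIcl
  set n := Fintype.card V with hndef
  have hIclosed : bootStep G 2 I = I := by
    rw [hIdef]; exact bootStep_bootClosure G 2 A0
  have hIcard2 : 2 ≤ I.card := by
    rw [hIdef]
    calc 2 = A0.card := hA0card.symm
      _ ≤ _ := card_le_card (subset_bootClosure G 2 A0)
  have hInonuniv : ∃ z, z ∉ I := by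
    by_contra hcon
    push_neg at hcon
    have huniv : I = Finset.univ := eq_univ_iff_forall.mpr hcon
    have hperc : Percolates G 2 A0 := ⟨n, by rw [← hndef] at *; rw [huniv] at hIdef; exact hIdef.symm⟩
    have h2 : 2 ∈ {k : ℕ | ∃ A : Finset V, A.card = k ∧ Percolates G 2 A} :=
      ⟨A0, hA0card, hperc⟩
    have := Nat.sInf_le h2
    unfold minContagious at hm
    omega
  -- closure of any pair has card ≤ I.card
  have hpair : ∀ x y : V, x ≠ y → (bootClosure G 2 ({x, y} : Finset V)).card ≤ I.card :=
    fun x y hxy => hImax _ (card_pair hxy)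
  have hkn : I.card ≤ n := by
    have := card_le_card (subset_univ I); rwa [card_univ] at this
  -- I.card ≥ 3
  have hk3 : 3 ≤ I.card := by
    obtain ⟨a, x, y, hxy, hax, hay⟩ : ∃ a x y : V, x ≠ y ∧ G.Adj a x ∧ G.Adj a y := by
      by_contra hcon
      push_neg at hcon
      have hdeg1 : ∀ v : V, G.degree v ≤ 1 := by
        intro v
        by_contra hd
        push_neg at hd
        rw [← SimpleGraph.card_neighborFinset_eq_degree] at hd
        obtain ⟨x, hx, y, hy, hxy⟩ := one_lt_card.mp hd
        rw [SimpleGraph.mem_neighborFinset] at hx hy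
        exact hcon v x y hxy hx hy
      obtain ⟨z0, hz0⟩ := hInonuniv
      obtain ⟨t, ht⟩ : ∃ t : V, t ∉ insert z0 (G.neighborFinset z0) := by
        have hc : (insert z0 (G.neighborFinset z0)).card < n := by
          have h1 : (insert z0 (G.neighborFinset z0)).card ≤ G.degree z0 + 1 := by
            have := card_insert_le z0 (G.neighborFinset z0)
            rw [SimpleGraph.card_neighborFinset_eq_degree] at this
            omega
          have := hdeg1 z0
          omega
        by_contra hcc
        push_neg at hcc
        have : (univ : Finset V) ⊆ insert z0 (G.neighborFinset z0) := fun t _ => hcc t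
        have := card_le_card this
        rw [card_univ, ← hndef] at this
        omega
      simp only [mem_insert, SimpleGraph.mem_neighborFinset] at ht
      push_neg at ht
      have hna : ¬ G.Adj t z0 := fun h => ht.2 (h.symm)
      have := hdeg t z0 ht.1 hna
      have := hdeg1 t
      have := hdeg1 z0
      omega
    have haxn : a ≠ x := G.ne_of_adj hax
    have hayn : a ≠ y := G.ne_of_adj hay
    have hmem : ({x, y, a} : Finset V) ⊆ bootClosure G 2 ({x, y} : Finset V) := by
      intro z hz
      simp only [mem_insert, mem_singleton] at hz
      have hx' : x ∈ bootClosure G 2 ({x, y} : Finset V) :=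
        subset_bootClosure G 2 _ (by simp)
      have hy' : y ∈ bootClosure G 2 ({x, y} : Finset V) :=
        subset_bootClosure G 2 _ (by simp)
      rcases hz with rfl | rfl | rfl
      · exact hx'
      · exact hy'
      · exact closure_spread G _ hx' hy' hxy hax hay
    have hcard3 : ({x, y, a} : Finset V).card = 3 := by
      rw [card_insert_of_notMem (by simp [hxy, haxn.symm]),
        card_insert_of_notMem (by simp [hayn.symm]), card_singleton]
    calc 3 = ({x, y, a} : Finset V).card := hcard3.symm
      _ ≤ _ := card_le_card hmem
      _ ≤ I.card := hpair x y hxy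
  -- main goal
  intro u hu
  rw [mem_sdiff] at hu
  have huI : u ∉ I := hu.2
  have hle1 : (G.neighborFinset u ∩ I).card ≤ 1 := closed_inter_le_one G hIclosed huI
  rcases Nat.lt_or_ge (G.neighborFinset u ∩ I).card 1 with hlt | hge
  swap
  · omega
  exfalso
  have hempty : G.neighborFinset u ∩ I = ∅ := card_eq_zero.mp (by omega)
  have hnoI : ∀ w ∈ I, ¬ G.Adj u w := by
    intro w hw hadj
    have : w ∈ G.neighborFinset u ∩ I := by
      simp [SimpleGraph.mem_neighborFinset, hadj, hw]
    rw [hempty] at this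
    exact absurd this (notMem_empty w)
  have hOreU : ∀ v ∈ I, n - 2 ≤ G.degree u + G.degree v := by
    intro v hv
    exact hdeg u v (fun h => huI (h ▸ hv)) (hnoI v hv)
  -- degree bound for u
  have hcard_d : G.degree u + I.card + 1 ≤ n := by
    have hdisj : Disjoint (G.neighborFinset u) I := by
      rw [disjoint_iff_inter_eq_empty]; exact hempty
    have hsub : insert u (G.neighborFinset u ∪ I) ⊆ univ := subset_univ _
    have hnotmem : u ∉ G.neighborFinset u ∪ I := by
      simp only [mem_union, SimpleGraph.mem_neighborFinset]
      push_neg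
      exact ⟨G.irrefl, huI⟩
    have h1 := card_le_card hsub
    rw [card_insert_of_notMem hnotmem, card_union_of_disjoint hdisj, card_univ, ← hndef,
      SimpleGraph.card_neighborFinset_eq_degree] at h1
    omega
  by_cases hA : G.degree u + I.card + 2 ≤ n
  · -- Case A: there is a non-neighbor x of u outside I
    obtain ⟨x, hxmem⟩ : ∃ x : V, x ∉ I ∪ insert u (G.neighborFinset u) := by
      by_contra hcc
      push_neg at hcc
      have hsub : (univ : Finset V) ⊆ I ∪ insert u (G.neighborFinset u) := fun t _ => hcc t
      have h1 := card_le_card hsub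
      have h2 : (I ∪ insert u (G.neighborFinset u)).card ≤ I.card + (1 + G.degree u) := by
        calc (I ∪ insert u (G.neighborFinset u)).card
            ≤ I.card + (insert u (G.neighborFinset u)).card := card_union_le _ _
          _ ≤ I.card + (1 + G.degree u) := by
              have := card_insert_le u (G.neighborFinset u)
              rw [SimpleGraph.card_neighborFinset_eq_degree] at this
              omega
      rw [card_univ, ← hndef] at h1
      omega
    simp only [mem_union, mem_insert, SimpleGraph.mem_neighborFinset] at hxmem
    push_neg at hxmem
    obtain ⟨hxI, hxu, hxadj⟩ := hxmem
    have hOrex : n - 2 ≤ G.degree x + G.degree u :=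
      hdeg x u hxu (fun h => hxadj h.symm)
    set P := G.neighborFinset u with hP
    set Q := G.neighborFinset x \ I with hQ
    have hQcard : G.degree x ≤ Q.card + 1 := by
      have hsub : G.neighborFinset x ⊆ Q ∪ (G.neighborFinset x ∩ I) := by
        intro z hz
        by_cases hzI : z ∈ I
        · exact subset_union_right (mem_inter.mpr ⟨hz, hzI⟩)
        · exact subset_union_left (mem_sdiff.mpr ⟨hz, hzI⟩)
      have h1 := card_le_card hsub
      have h2 := card_union_le Q (G.neighborFinset x ∩ I)
      have h3 := closed_inter_le_one G hIclosed hxI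
      rw [SimpleGraph.card_neighborFinset_eq_degree] at h1
      omega
    have hPQsub : P ∪ Q ⊆ univ \ (I ∪ {u, x}) := by
      intro z hz
      rw [mem_union] at hz
      simp only [mem_sdiff, mem_union, mem_insert, mem_singleton, mem_univ, true_and]
      push_neg
      rcases hz with hz | hz
      · rw [hP, SimpleGraph.mem_neighborFinset] at hz
        refine ⟨fun h => hnoI z h hz, ?_, ?_⟩
        · rintro rfl; exact G.irrefl hz
        · rintro rfl; exact hxadj hz
      · rw [hQ, mem_sdiff, SimpleGraph.mem_neighborFinset] at hz
        refine ⟨hz.2, ?_, ?_⟩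
        · rintro rfl; exact hxadj hz.1.symm
        · rintro rfl; exact G.irrefl hz.1
    have hIux : (I ∪ {u, x}).card = I.card + 2 := by
      rw [card_union_of_disjoint, card_pair (fun h => hxu h.symm)]
      rw [disjoint_left]
      intro z hz hz'
      simp only [mem_insert, mem_singleton] at hz'
      rcases hz' with rfl | rfl
      · exact huI hz
      · exact hxI hz
    have hPQcard : (P ∪ Q).card + (I.card + 2) ≤ n := by
      have h1 := card_le_card hPQsub
      rw [card_sdiff_of_subset (subset_univ _), card_univ, ← hndef, hIux] at h1
      omega
    have hinter := card_union_add_card_inter P Q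
    have hPd : P.card = G.degree u := SimpleGraph.card_neighborFinset_eq_degree G u
    -- I.card ≤ (P ∩ Q).card + 1
    have hintcard : I.card ≤ (P ∩ Q).card + 1 := by omega
    -- closure of {u, x} contains u, x and P ∩ Q
    have hucl : u ∈ bootClosure G 2 ({u, x} : Finset V) :=
      subset_bootClosure G 2 _ (by simp)
    have hxcl : x ∈ bootClosure G 2 ({u, x} : Finset V) :=
      subset_bootClosure G 2 _ (by simp)
    have hsubcl : insert u (insert x (P ∩ Q)) ⊆ bootClosure G 2 ({u, x} : Finset V) := by
      intro z hz
      simp only [mem_insert] at hz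
      rcases hz with rfl | rfl | hz
      · exact hucl
      · exact hxcl
      · rw [mem_inter, hP, hQ, mem_sdiff, SimpleGraph.mem_neighborFinset,
          SimpleGraph.mem_neighborFinset] at hz
        exact closure_spread G _ hucl hxcl hxu.symm hz.1.symm hz.2.1.symm
    have hcardcl : (insert u (insert x (P ∩ Q))).card = (P ∩ Q).card + 2 := by
      rw [card_insert_of_notMem, card_insert_of_notMem]
      · intro hx'
        rw [mem_inter, hP, hQ, mem_sdiff] at hx'
        exact G.irrefl ((G.mem_neighborFinset _ _).mp hx'.2.1)
      · intro hu'
        simp only [mem_insert] at hu'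
        rcases hu' with rfl | hu'
        · exact hxu rfl
        · rw [mem_inter, hP] at hu'
          exact G.irrefl ((G.mem_neighborFinset _ _).mp hu'.1)
    have hfinal := card_le_card hsubcl
    have := hpair u x (fun h => hxu h.symm)
    omega
  · -- Case B : u is adjacent to everything outside I except itself
    have hB : G.degree u + I.card + 1 = n := by omega
    set W := (univ \ I).erase u with hWdef
    have huW : u ∉ W := notMem_erase u _
    have hWmem : ∀ z, z ∈ W ↔ (z ≠ u ∧ z ∉ I) := by
      intro z; rw [hWdef, mem_erase, mem_sdiff]; simp
    have hWcard : W.card + I.card + 1 = n := by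
      have h1 : u ∈ univ \ I := mem_sdiff.mpr ⟨mem_univ u, huI⟩
      rw [hWdef, card_erase_of_mem h1, card_sdiff_of_subset (subset_univ I), card_univ, ← hndef]
      omega
    have hNu : G.neighborFinset u = W := by
      apply eq_of_subset_of_card_le
      · intro z hz
        rw [SimpleGraph.mem_neighborFinset] at hz
        rw [hWmem]
        exact ⟨fun h => G.irrefl (h ▸ hz), fun hzI => hnoI z hzI hz⟩
      · rw [SimpleGraph.card_neighborFinset_eq_degree]; omega
    have hUadj : ∀ z ∈ W, G.Adj u z := by
      intro z hz
      rw [← hNu] at hz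
      exact (G.mem_neighborFinset _ _).mp hz
    -- at most one vertex of I is adjacent to all the rest of I
    obtain ⟨u1, w1, hu1, hw1, hadj1⟩ :=
      boundary_edge G hconn (card_pos.mp (by omega)) hInonuniv
    have key2 : ∀ p ∈ I, ∀ q ∈ I, p ≠ q →
        (∀ z ∈ I, z ≠ p → G.Adj p z) → (∀ z ∈ I, z ≠ q → G.Adj q z) → False := by
      have main : ∀ p ∈ I, ∀ q ∈ I, p ≠ q → p ≠ w1 →
          (∀ z ∈ I, z ≠ p → G.Adj p z) → (∀ z ∈ I, z ≠ q → G.Adj q z) → False := by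
        intro p hp q hq hpq hpw hPp hPq
        set cl0 := bootClosure G 2 ({p, u1} : Finset V) with hcl0
        have hpu1 : p ≠ u1 := fun h => hu1 (h ▸ hp)
        have hpcl : p ∈ cl0 := subset_bootClosure G 2 _ (by simp)
        have hu1cl : u1 ∈ cl0 := subset_bootClosure G 2 _ (by simp)
        have hwcl : w1 ∈ cl0 := by
          by_cases hwp : w1 = p
          · exact hwp ▸ hpcl
          · exact closure_spread G _ hpcl hu1cl hpu1
              ((hPp w1 hw1 hwp).symm) hadj1.symm
        have hqcl : q ∈ cl0 := by
          by_cases hqw : q = w1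
          · exact hqw ▸ hwcl
          · exact closure_spread G _ hpcl hwcl hpw
              (hPq p hp hpq) (hPq w1 hw1 (fun h => hqw h.symm))
        have hIcl' : ∀ z ∈ I, z ∈ cl0 := by
          intro z hz
          by_cases hzp : z = p
          · exact hzp ▸ hpcl
          by_cases hzq : z = q
          · exact hzq ▸ hqcl
          · exact closure_spread G _ hpcl hqcl hpq ((hPp z hz hzp).symm) ((hPq z hz hzq).symm)
        have hsub : insert u1 I ⊆ cl0 := by
          intro z hz
          rw [mem_insert] at hz
          rcases hz with rfl | hz
          · exact hu1cl
          · exact hIcl' z hz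
        have h1 := card_le_card hsub
        rw [card_insert_of_notMem hu1] at h1
        have h2 := hpair p u1 hpu1
        rw [← hcl0] at h2
        omega
      intro p hp q hq hpq hPp hPq
      by_cases hpw : p = w1
      · exact main q hq p hp hpq.symm (fun h => hpq (hpw.trans h.symm)) hPq hPp
      · exact main p hp q hq hpq hpw hPp hPq
    -- the non-universal vertices of I
    set Snu := I.filter (fun v => ¬ ∀ z ∈ I, z ≠ v → G.Adj v z) with hSnudef
    have hSnucard : I.card ≤ Snu.card + 1 := by
      by_contra hcc
      push_neg at hcc
      have hsplit := card_filter_add_card_filter_not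
        (s := I) (p := fun v => ∀ z ∈ I, z ≠ v → G.Adj v z)
      have h2 : 2 ≤ (I.filter (fun v => ∀ z ∈ I, z ≠ v → G.Adj v z)).card := by
        rw [hSnudef] at hcc
        omega
      obtain ⟨p, hpm, q, hqm, hpq⟩ := one_lt_card.mp h2
      rw [mem_filter] at hpm hqm
      exact key2 p hpm.1 q hqm.1 hpq hpm.2 hqm.2
    -- every non-universal vertex has a neighbor in W
    have hvex : ∀ v ∈ Snu, ∃ uv, uv ∈ W ∧ G.Adj v uv := by
      intro v hv
      rw [hSnudef, mem_filter] at hv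
      obtain ⟨hvI, hvnu⟩ := hv
      have hdv := hOreU v hvI
      by_contra hcc
      push_neg at hcc
      have hsubv : G.neighborFinset v ⊆ I.erase v := by
        intro z hz
        rw [SimpleGraph.mem_neighborFinset] at hz
        rw [mem_erase]
        refine ⟨fun h => G.irrefl (h ▸ hz), ?_⟩
        by_contra hzI
        have hzu : z ≠ u := fun h => hnoI v hvI (h ▸ hz).symm
        exact hcc z ((hWmem z).mpr ⟨hzu, hzI⟩) hz
      have hNveq : G.neighborFinset v = I.erase v := by
        apply eq_of_subset_of_card_le hsubv
        rw [SimpleGraph.card_neighborFinset_eq_degree, card_erase_of_mem hvI]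
        omega
      apply hvnu
      intro z hz hzv
      have hmem : z ∈ G.neighborFinset v := by
        rw [hNveq, mem_erase]; exact ⟨hzv, hz⟩
      exact (G.mem_neighborFinset _ _).mp hmem
    -- injection from Snu into W gives 2|I| ≤ n
    have h2k : 2 * I.card ≤ n := by
      set f : V → V := fun v => if h : v ∈ Snu then (hvex v h).choose else v with hfdef
      have hmaps : ∀ v ∈ Snu, f v ∈ W := by
        intro v hv
        rw [hfdef]; simp only [hv, dif_pos]
        exact (hvex v hv).choose_spec.1
      have hinj : Set.InjOn f ↑Snu := by
        intro v1 h1 v2 h2 heq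
        rw [mem_coe] at h1 h2
        by_contra hne
        have e1 : G.Adj v1 (f v1) := by
          rw [hfdef]; simp only [h1, dif_pos]
          exact (hvex v1 h1).choose_spec.2
        have e2 : G.Adj v2 (f v2) := by
          rw [hfdef]; simp only [h2, dif_pos]
          exact (hvex v2 h2).choose_spec.2
        rw [heq] at e1
        have hfW := hmaps v2 h2
        have hfI : f v2 ∉ I := ((hWmem _).mp hfW).2
        have hsub2 : ({v1, v2} : Finset V) ⊆ G.neighborFinset (f v2) ∩ I := by
          intro z hz
          simp only [mem_insert, mem_singleton] at hz
          rw [mem_inter, SimpleGraph.mem_neighborFinset]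
          rcases hz with rfl | rfl
          · exact ⟨e1.symm, (mem_filter.mp (hSnudef ▸ h1)).1⟩
          · exact ⟨e2.symm, (mem_filter.mp (hSnudef ▸ h2)).1⟩
        have hc2 := card_le_card hsub2
        rw [card_pair hne] at hc2
        have := closed_inter_le_one G hIclosed hfI
        omega
      have hcardle := card_le_card_of_injOn f hmaps hinj
      omega
    -- pick a non-universal v and its W-neighbor uv
    obtain ⟨v, hvSnu⟩ : Snu.Nonempty := card_pos.mp (by omega)
    have hvI : v ∈ I := (mem_filter.mp (hSnudef ▸ hvSnu)).1
    obtain ⟨uv, huvW, huvadj⟩ := hvex v hvSnu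
    have huv : u ≠ v := fun h => huI (h ▸ hvI)
    set cl := bootClosure G 2 ({u, v} : Finset V) with hcldef
    have hucl : u ∈ cl := subset_bootClosure G 2 _ (by simp)
    have hvcl : v ∈ cl := subset_bootClosure G 2 _ (by simp)
    have huvcl : uv ∈ cl :=
      closure_spread G _ hucl hvcl huv (hUadj uv huvW).symm huvadj.symm
    set S := W.filter (fun z => z ∈ cl) with hSdef
    set T := W.filter (fun z => ¬ z ∈ cl) with hTdef
    have hSTcard : S.card + T.card = W.card :=
      card_filter_add_card_filter_not (s := W) (p := fun z => z ∈ cl)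
    have hSsub : S ⊆ W := filter_subset _ _
    have hTsub : T ⊆ W := filter_subset _ _
    have hcover : ∀ z ∈ W, z ∈ S ∨ z ∈ T := by
      intro z hz
      by_cases h : z ∈ cl
      · left; rw [hSdef, mem_filter]; exact ⟨hz, h⟩
      · right; rw [hTdef, mem_filter]; exact ⟨hz, h⟩
    have hScl : ∀ z ∈ S, z ∈ cl := by
      intro z hz; rw [hSdef] at hz; exact (mem_filter.mp hz).2
    have hTcl : ∀ z ∈ T, z ∉ cl := by
      intro z hz; rw [hTdef] at hz; exact (mem_filter.mp hz).2
    have hcross : ∀ a ∈ T, ∀ b ∈ S, ¬ G.Adj a b := by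
      intro a ha b hb hadj
      apply hTcl a ha
      have hbW : b ∈ W := hSsub hb
      have haW : a ∈ W := hTsub ha
      have hbu : b ≠ u := ((hWmem b).mp hbW).1
      exact closure_spread G _ (hScl b hb) hucl hbu hadj (hUadj a haW).symm
    have huvS : uv ∈ S := by
      rw [hSdef, mem_filter]; exact ⟨huvW, huvcl⟩
    by_cases hTe : T = ∅
    · -- the whole of W is in the closure : contradiction with maximality
      have hWS : W ⊆ cl := by
        intro z hz
        rcases hcover z hz with h | h
        · exact hScl z h
        · rw [hTe] at h; exact absurd h (notMem_empty z)
      have hsub : insert v (insert u W) ⊆ cl := by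
        intro z hz
        simp only [mem_insert] at hz
        rcases hz with rfl | rfl | hz
        · exact hvcl
        · exact hucl
        · exact hWS hz
      have hcard : (insert v (insert u W)).card = W.card + 2 := by
        rw [card_insert_of_notMem, card_insert_of_notMem huW]
        · intro h
          simp only [mem_insert] at h
          rcases h with rfl | h
          · exact huv rfl
          · exact ((hWmem v).mp h).2 hvI
      have h1 := card_le_card hsub
      have h2 := hpair u v huv
      rw [← hcldef] at h2
      omega
    · obtain ⟨a0, ha0T⟩ : T.Nonempty := nonempty_iff_ne_empty.mpr hTe
      -- neighborhood description for vertices of one side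
      have hNsub : ∀ (S' T' : Finset V), S' ⊆ W → T' ⊆ W → (∀ z ∈ W, z ∈ S' ∨ z ∈ T') →
          (∀ a ∈ T', ∀ b ∈ S', ¬ G.Adj a b) → ∀ b ∈ S',
          G.neighborFinset b ⊆ (S'.erase b ∪ {u}) ∪ (G.neighborFinset b ∩ I) := by
        intro S' T' hS' hT' hcov hcr b hb z hz
        rw [SimpleGraph.mem_neighborFinset] at hz
        by_cases hzI : z ∈ I
        · exact mem_union_right _ (mem_inter.mpr ⟨(G.mem_neighborFinset _ _).mpr hz, hzI⟩)
        · apply mem_union_left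
          by_cases hzu : z = u
          · exact mem_union_right _ (by simp [hzu])
          · apply mem_union_left
            have hzW : z ∈ W := (hWmem z).mpr ⟨hzu, hzI⟩
            rcases hcov z hzW with h | h
            · rw [mem_erase]; exact ⟨fun he => G.irrefl (he ▸ hz), h⟩
            · exact absurd hz.symm (hcr z h b hb)
      have hdegbd : ∀ (S' T' : Finset V), S' ⊆ W → T' ⊆ W → (∀ z ∈ W, z ∈ S' ∨ z ∈ T') →
          (∀ a ∈ T', ∀ b ∈ S', ¬ G.Adj a b) → ∀ b ∈ S', G.degree b ≤ S'.card + 1 := by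
        intro S' T' hS' hT' hcov hcr b hb
        have h1 := card_le_card (hNsub S' T' hS' hT' hcov hcr b hb)
        have hbI : b ∉ I := ((hWmem b).mp (hS' hb)).2
        have h2 := closed_inter_le_one G hIclosed hbI
        have h3 := card_union_le (S'.erase b ∪ {u}) (G.neighborFinset b ∩ I)
        have h4 := card_union_le (S'.erase b) ({u} : Finset V)
        rw [card_erase_of_mem hb, card_singleton] at h4
        rw [SimpleGraph.card_neighborFinset_eq_degree] at h1
        have hb1 : 1 ≤ S'.card := card_pos.mpr ⟨b, hb⟩
        omega
      have hcrossT : ∀ a ∈ S, ∀ b ∈ T, ¬ G.Adj a b :=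
        fun a ha b hb h => hcross b hb a ha h.symm
      have hcoverT : ∀ z ∈ W, z ∈ T ∨ z ∈ S := fun z hz => (hcover z hz).symm
      have hOreST : n - 2 ≤ G.degree a0 + G.degree uv := by
        apply hdeg a0 uv
        · intro h; exact hTcl a0 ha0T (h ▸ huvcl)
        · exact hcross a0 ha0T uv huvS
      have hk3' : I.card = 3 := by
        have hd1 := hdegbd S T hSsub hTsub hcover hcross uv huvS
        have hd2 := hdegbd T S hTsub hSsub hcoverT hcrossT a0 ha0T
        omega
      -- sharp structure on either side
      have hsharp : ∀ (S' T' : Finset V), S' ⊆ W → T' ⊆ W → (∀ z ∈ W, z ∈ S' ∨ z ∈ T') →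
          (∀ a ∈ T', ∀ b ∈ S', ¬ G.Adj a b) → Disjoint S' T' →
          S'.card + T'.card = W.card → T'.Nonempty → ∀ b ∈ S',
          (S'.erase b ⊆ G.neighborFinset b) ∧ (G.neighborFinset b ∩ I).card = 1 := by
        intro S' T' hS' hT' hcov hcr hdisj hadd hTne b hb
        obtain ⟨c, hc⟩ := hTne
        have hbc : b ≠ c := fun h => (disjoint_left.mp hdisj hb) (h ▸ hc)
        have hore : n - 2 ≤ G.degree b + G.degree c := by
          apply hdeg b c hbc
          intro h; exact hcr c hc b hb h.symm
        have hdc : G.degree c ≤ T'.card + 1 :=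
          hdegbd T' S' hT' hS' (fun z hz => (hcov z hz).symm)
            (fun a ha b' hb' h => hcr b' hb' a ha h.symm) c hc
        have hdb : S'.card + 1 ≤ G.degree b := by omega
        have hX := hNsub S' T' hS' hT' hcov hcr b hb
        have hbI : b ∉ I := ((hWmem b).mp (hS' hb)).2
        have hle1b := closed_inter_le_one G hIclosed hbI
        have hXcard : ((S'.erase b ∪ {u}) ∪ (G.neighborFinset b ∩ I)).card
            ≤ S'.card + (G.neighborFinset b ∩ I).card := by
          have h3 := card_union_le (S'.erase b ∪ {u}) (G.neighborFinset b ∩ I)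
          have h4 := card_union_le (S'.erase b) ({u} : Finset V)
          rw [card_erase_of_mem hb, card_singleton] at h4
          have hb1 : 1 ≤ S'.card := card_pos.mpr ⟨b, hb⟩
          omega
        have h1 := card_le_card hX
        rw [SimpleGraph.card_neighborFinset_eq_degree] at h1
        have hcard1 : (G.neighborFinset b ∩ I).card = 1 := by omega
        have hNeq : G.neighborFinset b = (S'.erase b ∪ {u}) ∪ (G.neighborFinset b ∩ I) := by
          apply eq_of_subset_of_card_le hX
          rw [SimpleGraph.card_neighborFinset_eq_degree]
          omega
        refine ⟨?_, hcard1⟩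
        intro z hz
        rw [hNeq]
        exact mem_union_left _ (mem_union_left _ hz)
      have hdisjST : Disjoint S T := by
        rw [disjoint_left]
        intro z hzS hzT
        exact (hTcl z hzT) (hScl z hzS)
      have hST4 : 4 ≤ S.card ∨ 4 ≤ T.card := by omega
      obtain ⟨R, hRsub, hRcard, hRsharp⟩ :
          ∃ R : Finset V, R ⊆ W ∧ 4 ≤ R.card ∧ ∀ b ∈ R,
            (R.erase b ⊆ G.neighborFinset b) ∧ (G.neighborFinset b ∩ I).card = 1 := by
        rcases hST4 with h | h
        · exact ⟨S, hSsub, h,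
            hsharp S T hSsub hTsub hcover hcross hdisjST hSTcard ⟨a0, ha0T⟩⟩
        · exact ⟨T, hTsub, h,
            hsharp T S hTsub hSsub hcoverT hcrossT hdisjST.symm (by omega) ⟨uv, huvS⟩⟩
      set g : V → V := fun b =>
        if h : (G.neighborFinset b ∩ I).Nonempty then h.choose else b with hgdef
      have hgmem : ∀ b ∈ R, g b ∈ I ∧ G.Adj b (g b) := by
        intro b hb
        have h1 := (hRsharp b hb).2
        have hne : (G.neighborFinset b ∩ I).Nonempty := card_pos.mp (by omega)
        rw [hgdef]
        simp only [hne, dif_pos]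
        have hcs := hne.choose_spec
        rw [mem_inter, SimpleGraph.mem_neighborFinset] at hcs
        exact ⟨hcs.2, hcs.1⟩
      obtain ⟨x, hxR, y, hyR, hxy, hgxy⟩ : ∃ x ∈ R, ∃ y ∈ R, x ≠ y ∧ g x = g y := by
        apply exists_ne_map_eq_of_card_lt_of_maps_to (t := I)
        · omega
        · exact fun b hb => (hgmem b hb).1
      obtain ⟨w, hwdef⟩ : ∃ w : V, g x = w := ⟨g x, rfl⟩
      have hwI : w ∈ I := hwdef ▸ (hgmem x hxR).1
      have hxw : G.Adj x w := hwdef ▸ (hgmem x hxR).2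
      have hyw : G.Adj y w := (hgxy.symm.trans hwdef) ▸ (hgmem y hyR).2
      have hxyadj : G.Adj x y := by
        have hsub := (hRsharp x hxR).1
        have hmem : y ∈ G.neighborFinset x := hsub (mem_erase.mpr ⟨hxy.symm, hyR⟩)
        exact (G.mem_neighborFinset _ _).mp hmem
      have hxI : x ∉ I := ((hWmem x).mp (hRsub hxR)).2
      have hyI' : y ∉ I := ((hWmem y).mp (hRsub hyR)).2
      have hxu : x ≠ u := ((hWmem x).mp (hRsub hxR)).1
      have hyu : y ≠ u := ((hWmem y).mp (hRsub hyR)).1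
      have hxwne : x ≠ w := fun h => hxI (h ▸ hwI)
      have hywne : y ≠ w := fun h => hyI' (h ▸ hwI)
      have huwne : u ≠ w := fun h => huI (h ▸ hwI)
      set cl' := bootClosure G 2 ({x, w} : Finset V) with hcl'def
      have hxcl' : x ∈ cl' := subset_bootClosure G 2 _ (by simp)
      have hwcl' : w ∈ cl' := subset_bootClosure G 2 _ (by simp)
      have hycl' : y ∈ cl' := closure_spread G _ hxcl' hwcl' hxwne hxyadj.symm hyw
      have hucl' : u ∈ cl' := closure_spread G _ hxcl' hycl' hxy
          (hUadj x (hRsub hxR)) (hUadj y (hRsub hyR))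
      have hsub4 : ({x, w, y, u} : Finset V) ⊆ cl' := by
        intro z hz
        simp only [mem_insert, mem_singleton] at hz
        rcases hz with rfl | rfl | rfl | rfl
        · exact hxcl'
        · exact hwcl'
        · exact hycl'
        · exact hucl'
      have hcard4 : ({x, w, y, u} : Finset V).card = 4 := by
        rw [card_insert_of_notMem (by simp [hxwne, hxy, hxu]),
          card_insert_of_notMem (by simp [Ne.symm hywne, Ne.symm huwne]),
          card_insert_of_notMem (by simp [hyu]), card_singleton]
      have h4 := card_le_card hsub4
      have h5 := hpair x w hxwne
      rw [← hcl'def] at h5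
      omega
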